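/- arXiv:1307.4277 — 6 statements merged into one kernel-verified Lean document; each statement's English description precedes it below -/
import Mathlib

section
/- Let a be a positive real number with a ≠ 1, and let d : ℝ → ℝ be an additive function such that the mapping φ : ℝ → ℝ defined by φ(x) = d(aˣ) − aˣ·ln(a)·d(x) is regular (i.e., locally bounded, or continuous, or Lebesgue measurable). Then there exists a real derivation χ : ℝ → ℝ such that d(x) = χ(x) + d(1)·x for all x ∈ ℝ. -/
open Real Set

/-- A function `φ` is locally bounded on a set `s` if every point of `s` has a
neighborhood (within `s`) on which `φ` is bounded. -/
def LocallyBoundedOn (φ : ℝ → ℝ) (s : Set ℝ) : Prop :=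
  ∀ x ∈ s, ∃ C : ℝ, ∀ᶠ y in nhdsWithin x s, |φ y| ≤ C

/-- A real-valued function is *regular* on its domain `s` if it is locally bounded,
or continuous, or Lebesgue measurable on `s`. -/
def RegularOn (φ : ℝ → ℝ) (s : Set ℝ) : Prop :=
  LocallyBoundedOn φ s ∨ ContinuousOn φ s ∨ Measurable (s.restrict φ)

/-- A real derivation: an additive function satisfying the Leibniz rule. -/
def IsRealDerivation (χ : ℝ → ℝ) : Prop :=
  (∀ x y : ℝ, χ (x + y) = χ x + χ y) ∧ (∀ x y : ℝ, χ (x * y) = x * χ y + y * χ x)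

/-! For `v = a ^ y` the Leibniz defect `u ↦ d (u * v) - u * d v - v * d u` is additive in `u`,
and at `u = a ^ x` it equals `φ (x + y) - a ^ x * φ y - a ^ y * φ x`, a regular function of `x`.
An additive function that becomes regular after the substitution `u = a ^ x` is bounded on a set
of positive measure, hence continuous by Steinhaus' theorem, hence linear. Evaluating at `u = 1`
shows that the defect is `-d 1 * (u * v)`, i.e. `d - d 1 * id` obeys the Leibniz rule for `v > 0`,
and for `v < 0` by oddness. -/

open MeasureTheory Filter Topology Bornology Asymptotics

theorem AddMonoidHom.continuous_of_isBounded_image_of_measure_pos {G H : Type*}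
    [NormedAddCommGroup G] [MeasurableSpace G] [BorelSpace G] [LocallyCompactSpace G]
    [SeminormedAddCommGroup H] [NormedSpace ℝ H]
    (μ : Measure G) [μ.IsAddHaarMeasure] [μ.InnerRegular]
    (f : G →+ H) {s : Set G} (hs : MeasurableSet s) (hμs : 0 < μ s)
    (hf : IsBounded (f '' s)) : Continuous f :=
  f.continuous_of_isBounded_nhds_zero (μ.sub_mem_nhds_zero_of_addHaar_pos s hs hμs)
    (by rw [Set.image_sub]; exact isBounded_sub hf hf)

theorem AddMonoidHom.continuous_of_isBigO_one (f : ℝ →+ ℝ) {x : ℝ}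
    (hf : (f : ℝ → ℝ) =O[𝓝 x] (fun _ => (1 : ℝ))) : Continuous f := by
  obtain ⟨C, hC⟩ := (isBigO_one_iff ℝ).1 hf
  obtain ⟨t, hCt, ht, hxt⟩ := eventually_nhds_iff.1 (eventually_map.1 hC)
  exact f.continuous_of_isBounded_image_of_measure_pos volume ht.measurableSet
    (ht.measure_pos volume ⟨x, hxt⟩)
    (isBounded_iff_forall_norm_le.2 ⟨C, by rintro _ ⟨u, hu, rfl⟩; exact hCt u hu⟩)

theorem exists_measure_pos_isBounded_image {α E : Type*} [MeasurableSpace α]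
    [NormedAddCommGroup E] [MeasurableSpace E] [OpensMeasurableSpace E] {μ : Measure α}
    {h : α → E} (hh : Measurable h) {t : Set α} (ht : MeasurableSet t) (hμt : 0 < μ t) :
    ∃ s ⊆ t, MeasurableSet s ∧ 0 < μ s ∧ IsBounded (h '' s) := by
  obtain ⟨n, hn⟩ : ∃ n : ℕ, 0 < μ (t ∩ {u | ‖h u‖ ≤ n}) := by
    by_contra! hnull
    refine hμt.ne' (measure_mono_null (fun u hu => ?_) (measure_iUnion_null fun n =>
      nonpos_iff_eq_zero.1 (hnull n)))
    exact mem_iUnion.2 ⟨⌈‖h u‖⌉₊, hu, Nat.le_ceil ‖h u‖⟩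
  exact ⟨_, inter_subset_left, ht.inter (measurableSet_le hh.norm measurable_const), hn,
    isBounded_iff_forall_norm_le.2 ⟨n, by rintro _ ⟨u, hu, rfl⟩; exact hu.2⟩⟩

theorem locallyBoundedOn_univ_iff {φ : ℝ → ℝ} :
    LocallyBoundedOn φ univ ↔ ∀ x, φ =O[𝓝 x] (fun _ => (1 : ℝ)) := by
  simp only [LocallyBoundedOn, mem_univ, forall_const, nhdsWithin_univ, isBigO_one_iff,
    IsBoundedUnder, Filter.IsBounded, eventually_map, Real.norm_eq_abs]

theorem measurable_univ_restrict_iff {φ : ℝ → ℝ} :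
    Measurable (univ.restrict φ) ↔ Measurable φ :=
  ⟨fun h => h.comp (MeasurableEquiv.Set.univ ℝ).symm.measurable,
    fun h => h.comp measurable_subtype_coe⟩

theorem RegularOn.univ_isBigO_one_or_measurable {φ : ℝ → ℝ} (hφ : RegularOn φ univ) :
    (∀ x, φ =O[𝓝 x] (fun _ => (1 : ℝ))) ∨ Measurable φ := by
  rcases hφ with hb | hc | hm
  · exact .inl (locallyBoundedOn_univ_iff.1 hb)
  · exact .inl fun x => (continuousOn_univ.1 hc).continuousAt.tendsto.isBigO_one ℝ
  · exact .inr (measurable_univ_restrict_iff.1 hm)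

def leibnizDefect (d : ℝ →+ ℝ) (v : ℝ) : ℝ →+ ℝ :=
  AddMonoidHom.mk' (fun u => d (u * v) - u * d v - v * d u) fun u w => by
    simp only [add_mul, map_add]; ring

section rpow

variable {a : ℝ}

theorem AddMonoidHom.continuous_of_regularOn_comp_rpow (ha : 0 < a) (ha1 : a ≠ 1)
    (f : ℝ →+ ℝ) (hf : RegularOn (fun x => f (a ^ x)) univ) : Continuous f := by
  have hf_logb : EqOn f (fun u => f (a ^ logb a u)) (Ioi 0) := fun u hu =>
    congrArg f (rpow_logb ha ha1 hu).symm
  rcases hf.univ_isBigO_one_or_measurable with hb | hm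
  · refine f.continuous_of_isBigO_one (x := 1) ?_
    have hlogb : Tendsto (logb a) (𝓝 1) (𝓝 0) := by
      simpa using (continuousAt_logb (b := a) one_ne_zero).tendsto
    exact (hf_logb.eventuallyEq_of_mem (Ioi_mem_nhds one_pos)).trans_isBigO
      ((hb 0).comp_tendsto hlogb)
  · obtain ⟨s, hst, hs, hμs, hbdd⟩ := exists_measure_pos_isBounded_image (μ := volume)
      (hm.comp (measurable_log.div_const (log a))) measurableSet_Ioi
      (isOpen_Ioi.measure_pos volume nonempty_Ioi)
    refine f.continuous_of_isBounded_image_of_measure_pos volume hs hμs ?_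
    rwa [(hf_logb.mono hst).image_eq]

theorem RegularOn.comp_add_const_sub_rpow_mul_sub_rpow_mul (ha : 0 < a) {φ : ℝ → ℝ}
    (hφ : RegularOn φ univ) (y : ℝ) :
    RegularOn (fun x => φ (x + y) - a ^ x * φ y - a ^ y * φ x) univ := by
  have hrpow : Continuous fun x : ℝ => a ^ x := continuous_const_rpow ha.ne'
  rcases hφ with hb | hc | hm
  · rw [locallyBoundedOn_univ_iff] at hb
    refine .inl (locallyBoundedOn_univ_iff.2 fun x => ?_)
    refine (((hb (x + y)).comp_tendsto ?_).sub ?_).sub ((hb x).const_mul_left _)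
    · exact (continuous_add_const y).tendsto x
    · exact ((hrpow.mul continuous_const).tendsto x).isBigO_one ℝ
  · rw [continuousOn_univ] at hc
    exact .inr (.inl (continuousOn_univ.2 (by fun_prop)))
  · rw [measurable_univ_restrict_iff] at hm
    exact .inr (.inr (measurable_univ_restrict_iff.2 (by fun_prop)))

theorem leibnizDefect_comp_rpow (ha : 0 < a) (d : ℝ →+ ℝ) {φ : ℝ → ℝ}
    (hφ : φ = fun x => d (a ^ x) - a ^ x * log a * d x) (y : ℝ) :
    (fun x => leibnizDefect d (a ^ y) (a ^ x)) =
      fun x => φ (x + y) - a ^ x * φ y - a ^ y * φ x := by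
  funext x
  simp only [hφ, leibnizDefect, AddMonoidHom.mk'_apply, map_add, rpow_add ha]
  ring

theorem isRealDerivation_sub_mul_of_regularOn (ha : 0 < a) (ha1 : a ≠ 1) (d : ℝ →+ ℝ)
    (hreg : RegularOn (fun x => d (a ^ x) - a ^ x * log a * d x) univ) :
    IsRealDerivation fun x => d x - d 1 * x := by
  have hpos : ∀ u v, 0 < v → d (u * v) = u * d v + v * d u - d 1 * (u * v) := by
    intro u v hv
    rw [← rpow_logb ha ha1 hv]
    set y := logb a v
    have hcont : Continuous (leibnizDefect d (a ^ y)) :=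
      (leibnizDefect d (a ^ y)).continuous_of_regularOn_comp_rpow ha ha1 <| by
        rw [leibnizDefect_comp_rpow ha d rfl y]
        exact hreg.comp_add_const_sub_rpow_mul_sub_rpow_mul ha y
    have hlin := map_real_smul _ hcont u 1
    simp only [leibnizDefect, AddMonoidHom.mk'_apply, smul_eq_mul, mul_one, one_mul] at hlin
    linear_combination hlin
  have hmul : ∀ u v, d (u * v) = u * d v + v * d u - d 1 * (u * v) := by
    intro u v
    rcases lt_trichotomy v 0 with hv | rfl | hv
    · have h := hpos (-u) (-v) (neg_pos.2 hv)
      rw [neg_mul_neg, map_neg, map_neg] at h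
      linear_combination h
    · simp
    · exact hpos u v hv
  refine ⟨fun x y => ?_, fun x y => ?_⟩
  · beta_reduce; rw [map_add]; ring
  · linear_combination hmul x y

end rpow

theorem stmt_1 (a : ℝ) (ha : 0 < a) (ha1 : a ≠ 1) (d : ℝ → ℝ)
    (hd : ∀ x y : ℝ, d (x + y) = d x + d y)
    (hreg : RegularOn (fun x : ℝ => d (a ^ x) - a ^ x * Real.log a * d x) Set.univ) :
    ∃ χ : ℝ → ℝ, IsRealDerivation χ ∧ ∀ x : ℝ, d x = χ x + d 1 * x :=
  ⟨_, isRealDerivation_sub_mul_of_regularOn ha ha1 (AddMonoidHom.mk' d hd) hreg,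
    fun x => by simp⟩
end

section
/- Let d : ℝ → ℝ be an additive function such that the mapping φ : ℝ → ℝ defined by φ(x) = d(sin(x)) − cos(x)·d(x) is regular (i.e., locally bounded, or continuous, or Lebesgue measurable). Then there exists a real derivation χ : ℝ → ℝ such that d(x) = χ(x) + d(1)·x for all x ∈ ℝ. -/
/-!
With `φ x = d (sin x) - cos x * d x`, the identity `sin (x + y) + sin (x - y) = 2 * cos y * sin x`
and additivity of `d` give
`d (cos y * sin x) - cos y * d (sin x)`
  `= (φ (x + y) + φ (x - y)) / 2 - cos y * φ x - sin x * sin y * d y`.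
So for `c = cos y ∈ [-1, 1]` the additive map `t ↦ d (c * t) - c * d t`, composed with `sin`, is
bounded near `0` or measurable together with `φ`; undoing `sin` by `arcsin`, the map itself is, so it
is continuous and hence linear. This is the Leibniz rule for `χ = d - d 1 • id` with first factor in
`[-1, 1]`, and additivity of `χ` extends it to all factors by scaling.
-/

open Real Set

open Filter Topology Asymptotics

lemma RegularOn.boundedAtFilter_or_measurable {φ : ℝ → ℝ} (h : RegularOn φ univ) :
    (∀ x, (𝓝 x).BoundedAtFilter φ) ∨ Measurable φ := by
  rcases h with hb | hc | hm
  · left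
    intro x
    obtain ⟨C, hC⟩ := hb x (mem_univ x)
    rw [nhdsWithin_univ] at hC
    exact IsBigO.of_bound C (hC.mono fun y hy => by simpa using hy)
  · exact Or.inl fun x => ((continuousOn_univ.mp hc).tendsto x).isBigO_one ℝ
  · exact Or.inr (hm.comp (measurable_id.subtype_mk (h := mem_univ)))

lemma boundedAtFilter_nhds_zero_of_comp_sin {g : ℝ → ℝ} (h : (𝓝 0).BoundedAtFilter (g ∘ sin)) :
    (𝓝 0).BoundedAtFilter g := by
  have harcsin : Tendsto arcsin (𝓝 0) (𝓝 0) := by simpa using continuous_arcsin.tendsto 0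
  have hsin_arcsin : (g ∘ sin) ∘ arcsin =ᶠ[𝓝 0] g := by
    filter_upwards [Icc_mem_nhds (by norm_num : (-1 : ℝ) < 0) one_pos] with t ht
    simp [sin_arcsin ht.1 ht.2]
  exact (h.comp_tendsto harcsin).congr' hsin_arcsin EventuallyEq.rfl

namespace AddMonoidHom

variable (g : ℝ →+ ℝ)

lemma eq_mul_of_continuous (hg : Continuous g) (x : ℝ) : g x = g 1 * x := by
  simpa [mul_comm] using map_real_smul g hg x 1

lemma continuous_of_boundedAtFilter (hg : (𝓝 0).BoundedAtFilter g) : Continuous g := by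
  obtain ⟨C, hC⟩ := hg.bound
  refine g.continuous_of_isBounded_nhds_zero hC (isBounded_iff_forall_norm_le.2 ⟨C, ?_⟩)
  rintro _ ⟨x, hx, rfl⟩
  simpa using hx

lemma measurable_of_measurable_comp_sin (hg : Measurable (g ∘ sin)) : Measurable g := by
  have hg_eq : ⇑g = fun x => (g ∘ sin) (arcsin (Int.fract x)) + ⌊x⌋ * g 1 := by
    funext x
    have hfract : Int.fract x ∈ Icc (-1 : ℝ) 1 :=
      ⟨by linarith [Int.fract_nonneg x], (Int.fract_lt_one x).le⟩
    rw [Function.comp_apply, sin_arcsin hfract.1 hfract.2, ← zsmul_eq_mul, ← map_zsmul, zsmul_one,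
      ← map_add, Int.fract_add_floor]
  rw [hg_eq]
  exact (hg.comp (continuous_arcsin.measurable.comp measurable_fract)).add
    ((measurable_from_top.comp measurable_id.floor).mul_const _)

lemma leibniz_of_leibniz_Icc (χ : ℝ →+ ℝ)
    (h : ∀ a ∈ Icc (-1 : ℝ) 1, ∀ b, χ (a * b) = a * χ b + b * χ a) (a b : ℝ) :
    χ (a * b) = a * χ b + b * χ a := by
  set n : ℕ := ⌈|a|⌉₊ + 1
  have hn : (0 : ℝ) < n := by positivity
  have ha_le : |a| ≤ n := (Nat.le_ceil _).trans (by simp [n])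
  have ha_div : a / n ∈ Icc (-1 : ℝ) 1 := by
    rw [mem_Icc, le_div_iff₀ hn, div_le_one hn]
    constructor <;> linarith [abs_le.mp ha_le]
  have hχ_nsmul (x : ℝ) : χ (n * x) = n * χ x := by
    rw [← nsmul_eq_mul, map_nsmul, nsmul_eq_mul]
  have hna : (n : ℝ) * (a / n) = a := mul_div_cancel₀ a hn.ne'
  calc χ (a * b) = n * χ (a / n * b) := by rw [← hχ_nsmul, ← mul_assoc, hna]
    _ = a * χ b + b * (n * χ (a / n)) := by rw [h _ ha_div]; linear_combination χ b * hna
    _ = a * χ b + b * χ a := by rw [← hχ_nsmul, hna]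

end AddMonoidHom

variable (d : ℝ →+ ℝ)

noncomputable def sinDefect (x : ℝ) : ℝ := d (sin x) - cos x * d x

def scaleDefect (c : ℝ) : ℝ →+ ℝ :=
  AddMonoidHom.mk' (fun t => d (c * t) - c * d t) fun s t => by
    simp only [mul_add, map_add]
    ring

lemma scaleDefect_apply (c t : ℝ) : scaleDefect d c t = d (c * t) - c * d t := rfl

lemma scaleDefect_cos_sin (x y : ℝ) :
    scaleDefect d (cos y) (sin x) = (sinDefect d (x + y) + sinDefect d (x - y)
      - 2 * cos y * sinDefect d x) / 2 - sin x * sin y * d y := by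
  have hsin : sin (x + y) + sin (x - y) = 2 * (cos y * sin x) := by
    rw [sin_add, sin_sub]; ring
  have hd_sin : d (sin (x + y)) + d (sin (x - y)) = 2 * d (cos y * sin x) := by
    rw [← map_add, hsin, two_mul, map_add, two_mul]
  simp only [scaleDefect_apply, sinDefect, cos_add, cos_sub, map_add, map_sub]
  linear_combination -hd_sin / 2

lemma continuous_scaleDefect_cos
    (h : (∀ x, (𝓝 x).BoundedAtFilter (sinDefect d)) ∨ Measurable (sinDefect d)) (y : ℝ) :
    Continuous (scaleDefect d (cos y)) := by
  have hcomp : scaleDefect d (cos y) ∘ sin = fun x => (sinDefect d (x + y) + sinDefect d (x - y)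
      - 2 * cos y * sinDefect d x) / 2 - sin x * sin y * d y :=
    funext fun x => scaleDefect_cos_sin d x y
  rcases h with hb | hm
  · refine (scaleDefect d (cos y)).continuous_of_boundedAtFilter
      (boundedAtFilter_nhds_zero_of_comp_sin ?_)
    have hshift (a : ℝ) : (𝓝 0).BoundedAtFilter fun x => sinDefect d (x + a) :=
      (hb a).comp_tendsto (by simpa using (continuous_add_const a).tendsto 0)
    have hsin : (𝓝 0).BoundedAtFilter fun x => sin x * sin y * d y :=
      ((by fun_prop : Continuous fun x => sin x * sin y * d y).tendsto 0).isBigO_one ℝ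
    have hshift_neg : (𝓝 0).BoundedAtFilter fun x => sinDefect d (x - y) := by
      simpa only [sub_eq_add_neg] using hshift (-y)
    rw [hcomp]
    simp only [div_eq_inv_mul]
    exact ((((hshift y).add hshift_neg).sub ((hb 0).const_mul_left _)).const_mul_left _).sub hsin
  · refine MeasureTheory.Measure.AddMonoidHom.continuous_of_measurable _
      ((scaleDefect d (cos y)).measurable_of_measurable_comp_sin ?_)
    rw [hcomp]
    fun_prop

lemma isRealDerivation_sub_mul
    (h : (∀ x, (𝓝 x).BoundedAtFilter (sinDefect d)) ∨ Measurable (sinDefect d)) :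
    IsRealDerivation fun x => d x - d 1 * x := by
  let χ : ℝ →+ ℝ := d - d 1 • AddMonoidHom.id ℝ
  have hχ (x : ℝ) : χ x = d x - d 1 * x := rfl
  refine ⟨fun x y => by simp only [map_add]; ring, fun a b => ?_⟩
  show χ (a * b) = a * χ b + b * χ a
  refine χ.leibniz_of_leibniz_Icc (fun c hc t => ?_) a b
  have hcos : cos (arccos c) = c := cos_arccos hc.1 hc.2
  have hlin := (scaleDefect d c).eq_mul_of_continuous
    (hcos ▸ continuous_scaleDefect_cos d h (arccos c)) t
  simp only [hχ, scaleDefect_apply, mul_one] at hlin ⊢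
  linear_combination hlin

theorem stmt_3 (d : ℝ → ℝ)
    (hd : ∀ x y : ℝ, d (x + y) = d x + d y)
    (hreg : RegularOn (fun x : ℝ => d (Real.sin x) - Real.cos x * d x) Set.univ) :
    ∃ χ : ℝ → ℝ, IsRealDerivation χ ∧ ∀ x : ℝ, d x = χ x + d 1 * x :=
  ⟨_, isRealDerivation_sub_mul (.mk' d hd) hreg.boundedAtFilter_or_measurable,
    fun x => (sub_add_cancel (d x) (d 1 * x)).symm⟩
end

section
/- Let d : ℝ → ℝ be an additive function such that the mapping φ : ℝ → ℝ defined by φ(x) = d(cosh(x)) − sinh(x)·d(x) is regular (i.e., locally bounded, or continuous, or Lebesgue measurable). Then there exists a real derivation χ : ℝ → ℝ such that d(x) = χ(x) + d(1)·x for all x ∈ ℝ. -/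
/-!
Write `D x y = d (x * y) - x * d y - y * d x + d 1 * x * y`. Each `D x` is additive with
`D x 1 = 0`, so `χ = d - d 1 • id` is a derivation as soon as every `D x` is continuous, a continuous
additive map being linear. The diagonal `Q x = D x x` satisfies `Q (x + y) = Q x + 2 D x y + Q y`
and is `ℚ`-periodic, so `D x` is continuous once `Q` is measurable, or bounded near one point.
From `cosh (2t) = 2 cosh² t - 1` one gets
`Q (cosh t) = (φ (2t) - 4 cosh t φ t + d 1) / 2 + d 1 cosh² t`,
so `Q` inherits the regularity of `φ` on `[1, ∞)`, hence everywhere by periodicity.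
-/

open Real Set

open Filter Topology Asymptotics

namespace AddMonoidHom

variable (f : ℝ →+ ℝ)

noncomputable def leibnizDefect (x : ℝ) : ℝ →+ ℝ :=
  AddMonoidHom.mk' (fun y => f (x * y) - x * f y - y * f x + f 1 * x * y) fun y z => by
    simp only [mul_add, add_mul, map_add]; ring

noncomputable def coshDefect (t : ℝ) : ℝ := f (cosh t) - sinh t * f t

variable {f}

@[simp]
lemma leibnizDefect_apply (x y : ℝ) :
    f.leibnizDefect x y = f (x * y) - x * f y - y * f x + f 1 * x * y := rfl

lemma leibnizDefect_one (x : ℝ) : f.leibnizDefect x 1 = 0 := by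
  simp only [leibnizDefect_apply, mul_one]; ring

lemma leibnizDefect_ratCast (x : ℝ) (q : ℚ) : f.leibnizDefect x q = 0 := by
  rw [← mul_one (q : ℝ), ← smul_eq_mul, map_ratCast_smul _ ℝ ℝ, leibnizDefect_one, smul_zero]

lemma leibnizDefect_add_self (x y : ℝ) :
    f.leibnizDefect (x + y) (x + y) =
      f.leibnizDefect x x + 2 * f.leibnizDefect x y + f.leibnizDefect y y := by
  simp only [leibnizDefect_apply, mul_add, add_mul, map_add, mul_comm y x]; ring

lemma leibnizDefect_add_ratCast_self (x : ℝ) (q : ℚ) :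
    f.leibnizDefect (x + q) (x + q) = f.leibnizDefect x x := by
  rw [leibnizDefect_add_self, leibnizDefect_ratCast, leibnizDefect_ratCast]; ring

lemma leibnizDefect_eq_zero_of_continuous {x : ℝ} (h : Continuous (f.leibnizDefect x)) :
    f.leibnizDefect x = 0 := by
  ext y
  rw [← mul_one y, ← smul_eq_mul, map_real_smul _ h, leibnizDefect_one, smul_zero, zero_apply]

lemma isRealDerivation_sub_of_continuous_leibnizDefect
    (h : ∀ x, Continuous (f.leibnizDefect x)) : IsRealDerivation fun x => f x - f 1 * x := by
  refine ⟨fun x y => by simp only [map_add]; ring, fun x y => ?_⟩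
  have hxy := DFunLike.congr_fun (leibnizDefect_eq_zero_of_continuous (h x)) y
  rw [leibnizDefect_apply, zero_apply] at hxy
  linear_combination hxy

lemma continuous_leibnizDefect_of_abs_le {C : ℝ} (hC : ∀ x, |f.leibnizDefect x x| ≤ C) (x : ℝ) :
    Continuous (f.leibnizDefect x) := by
  refine (f.leibnizDefect x).continuous_of_isBounded_nhds_zero univ_mem ?_
  refine isBounded_iff_forall_norm_le.mpr ⟨3 * C / 2, ?_⟩
  rintro _ ⟨y, -, rfl⟩
  have hpolar := leibnizDefect_add_self (f := f) x y
  rw [Real.norm_eq_abs, abs_le]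
  have := abs_le.mp (hC x); have := abs_le.mp (hC y); have := abs_le.mp (hC (x + y))
  constructor <;> linarith

lemma continuous_leibnizDefect_of_measurable (h : Measurable fun x => f.leibnizDefect x x)
    (x : ℝ) : Continuous (f.leibnizDefect x) := by
  refine MeasureTheory.Measure.AddMonoidHom.continuous_of_measurable _ ?_
  have hpolar : ⇑(f.leibnizDefect x) = fun y =>
      (f.leibnizDefect (x + y) (x + y) - f.leibnizDefect x x - f.leibnizDefect y y) / 2 := by
    ext y; rw [leibnizDefect_add_self]; ring
  rw [hpolar]
  exact (((h.comp (measurable_const_add x)).sub measurable_const).sub h).div_const 2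

lemma exists_abs_leibnizDefect_self_le {c : ℝ}
    (h : (fun x => f.leibnizDefect x x) =O[𝓝 c] fun _ => (1 : ℝ)) :
    ∃ C, ∀ x, |f.leibnizDefect x x| ≤ C := by
  obtain ⟨C, hC⟩ := (isBigO_one_iff ℝ).mp h
  obtain ⟨ε, hε, hball⟩ := Metric.eventually_nhds_iff.mp hC
  refine ⟨C, fun x => ?_⟩
  obtain ⟨q, hq⟩ := exists_rat_btwn (show c - x - ε < c - x + ε by linarith)
  rw [← leibnizDefect_add_ratCast_self x q]
  refine hball ?_
  rw [Real.dist_eq, abs_lt]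
  constructor <;> linarith [hq.1, hq.2]

lemma leibnizDefect_cosh_self (t : ℝ) :
    f.leibnizDefect (cosh t) (cosh t) =
      (f.coshDefect (2 * t) - 4 * cosh t * f.coshDefect t + f 1) / 2 + f 1 * cosh t ^ 2 := by
  have hcosh : cosh (2 * t) = cosh t * cosh t + cosh t * cosh t - 1 := by
    rw [cosh_two_mul, sinh_sq]; ring
  rw [coshDefect, coshDefect, hcosh, sinh_two_mul, two_mul t, map_sub, map_add, map_add,
    leibnizDefect_apply]
  ring

lemma leibnizDefect_self_of_one_le {u : ℝ} (hu : 1 ≤ u) :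
    f.leibnizDefect u u = (f.coshDefect (2 * arcosh u) - 4 * u * f.coshDefect (arcosh u) + f 1) / 2
      + f 1 * u ^ 2 := by
  simpa only [cosh_arcosh hu] using f.leibnizDefect_cosh_self (arcosh u)

lemma measurable_leibnizDefect_self (h : Measurable f.coshDefect) :
    Measurable fun x => f.leibnizDefect x x := by
  have hfract : (fun x => f.leibnizDefect x x) = (fun u =>
      (f.coshDefect (2 * arcosh u) - 4 * u * f.coshDefect (arcosh u) + f 1) / 2 + f 1 * u ^ 2) ∘
        fun x => Int.fract x + 1 := by
    ext x
    have hx : Int.fract x + 1 = x + ((1 - ⌊x⌋ : ℤ) : ℚ) := by push_cast; rw [Int.fract]; ring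
    rw [Function.comp_apply, ← leibnizDefect_self_of_one_le (by linarith [Int.fract_nonneg x]),
      hx, leibnizDefect_add_ratCast_self]
  have harcosh : Measurable arcosh := by unfold arcosh; fun_prop
  rw [hfract]
  exact Measurable.comp (by fun_prop) ((measurable_fract (R := ℝ)).add_const 1)

lemma isBigO_leibnizDefect_self (h : ∀ t, f.coshDefect =O[𝓝 t] fun _ => (1 : ℝ)) :
    (fun u => f.leibnizDefect u u) =O[𝓝 (cosh 1)] fun _ => (1 : ℝ) := by
  have hu : ∀ᶠ u in 𝓝 (cosh 1), 1 ≤ u := Ici_mem_nhds (one_lt_cosh.2 one_ne_zero)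
  have harcosh : Tendsto arcosh (𝓝 (cosh 1)) (𝓝 1) := by
    simpa only [arcosh_cosh zero_le_one] using (continuousOn_arcosh.continuousAt hu).tendsto
  have hid : (fun u : ℝ => u) =O[𝓝 (cosh 1)] fun _ => (1 : ℝ) := tendsto_id.isBigO_one ℝ
  have h1 : (fun u => f.coshDefect (arcosh u)) =O[𝓝 (cosh 1)] fun _ => (1 : ℝ) :=
    (h 1).comp_tendsto harcosh
  have h2 : (fun u => f.coshDefect (2 * arcosh u)) =O[𝓝 (cosh 1)] fun _ => (1 : ℝ) :=
    (h 2).comp_tendsto (by simpa using harcosh.const_mul 2)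
  have hsq : (fun u : ℝ => u ^ 2) =O[𝓝 (cosh 1)] fun _ => (1 : ℝ) := by
    simpa only [one_pow] using hid.pow 2
  have hprod : (fun u => 4 * u * f.coshDefect (arcosh u)) =O[𝓝 (cosh 1)] fun _ => (1 : ℝ) := by
    simpa only [mul_one] using (hid.const_mul_left 4).mul h1
  have hsum := (((h2.sub hprod).add (isBigO_const_one ℝ (f 1) _)).const_mul_left (1 / 2)).add
    (hsq.const_mul_left (f 1))
  refine hsum.congr' (hu.mono fun u hu => ?_) EventuallyEq.rfl
  dsimp only
  rw [leibnizDefect_self_of_one_le hu]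
  ring

end AddMonoidHom

lemma RegularOn.isBigO_one_or_measurable {φ : ℝ → ℝ} (h : RegularOn φ univ) :
    (∀ t, φ =O[𝓝 t] fun _ => (1 : ℝ)) ∨ Measurable φ := by
  rcases h with hloc | hcont | hmeas
  · refine .inl fun t => ?_
    obtain ⟨C, hC⟩ := hloc t (mem_univ t)
    rw [nhdsWithin_univ] at hC
    exact IsBoundedUnder.isBigO_one ℝ ⟨C, hC⟩
  · exact .inl fun t => ((continuousOn_univ.mp hcont).tendsto t).isBigO_one ℝ
  · exact .inr (hmeas.comp (measurable_id.subtype_mk (h := mem_univ)))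

theorem stmt_4 (d : ℝ → ℝ)
    (hd : ∀ x y : ℝ, d (x + y) = d x + d y)
    (hreg : RegularOn (fun x : ℝ => d (Real.cosh x) - Real.sinh x * d x) Set.univ) :
    ∃ χ : ℝ → ℝ, IsRealDerivation χ ∧ ∀ x : ℝ, d x = χ x + d 1 * x := by
  let f : ℝ →+ ℝ := AddMonoidHom.mk' d hd
  suffices hcont : ∀ x, Continuous (f.leibnizDefect x) from
    ⟨_, f.isRealDerivation_sub_of_continuous_leibnizDefect hcont, fun x => by simp [f]⟩
  rcases hreg.isBigO_one_or_measurable with hbdd | hmeas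
  · obtain ⟨C, hC⟩ := f.exists_abs_leibnizDefect_self_le (f.isBigO_leibnizDefect_self hbdd)
    exact f.continuous_leibnizDefect_of_abs_le hC
  · exact f.continuous_leibnizDefect_of_measurable (f.measurable_leibnizDefect_self hmeas)
end

section
/- Let d : ℝ → ℝ be an additive function such that the mapping φ : ℝ → ℝ defined by φ(x) = d(sinh(x)) − cosh(x)·d(x) is regular (i.e., locally bounded, or continuous, or Lebesgue measurable). Then there exists a real derivation χ : ℝ → ℝ such that d(x) = χ(x) + d(1)·x for all x ∈ ℝ. -/
/-!
Put `φ x = d (sinh x) - cosh x * d x`. The addition formulas for `sinh` and `cosh` give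
`φ (x + y) + φ (x - y) - 2 cosh y φ x = 2 g_y (sinh x)` with
`g_y u = d (u cosh y) - cosh y d u - u sinh y d y`, which is additive in `u`. Since `sinh` is a
homeomorphism, `g_y` inherits the regularity of `φ`, so it is linear. For `D x = d x - d 1 * x`
this is the Leibniz rule `D (u t) = t D u + u D t` for every `t = cosh y ≥ 1`, and additivity
extends it to all `t`.
-/

open Real Set

open Filter Topology Asymptotics

def LocallyBoundedOrMeasurable (φ : ℝ → ℝ) : Prop :=
  (∀ x, φ =O[𝓝 x] (fun _ => (1 : ℝ))) ∨ Measurable φ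

theorem RegularOn.locallyBoundedOrMeasurable {φ : ℝ → ℝ} (h : RegularOn φ univ) :
    LocallyBoundedOrMeasurable φ := by
  rcases h with hb | hc | hm
  · refine .inl fun x => ?_
    obtain ⟨C, hC⟩ := hb x (mem_univ x)
    rw [nhdsWithin_univ] at hC
    exact .of_bound C (by simpa using hC)
  · exact .inl fun x => ((continuousOn_univ.mp hc).tendsto x).isBigO_one ℝ
  · exact .inr (hm.comp (MeasurableEquiv.Set.univ ℝ).symm.measurable)

section Additive

variable {f : ℝ → ℝ}

theorem eq_mul_of_additive_of_continuous (hf : ∀ x y, f (x + y) = f x + f y)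
    (hc : Continuous f) (x : ℝ) : f x = f 1 * x := by
  simpa [mul_comm] using map_real_smul (AddMonoidHom.mk' f hf) hc x 1

theorem continuous_of_additive_of_isBigO_one (hf : ∀ x y, f (x + y) = f x + f y)
    (hb : f =O[𝓝 0] (fun _ => (1 : ℝ))) : Continuous f := by
  obtain ⟨C, hC⟩ := (isBigO_one_iff ℝ).mp hb
  refine (AddMonoidHom.mk' f hf).continuous_of_isBounded_nhds_zero (s := {x | ‖f x‖ ≤ C}) hC ?_
  exact (Metric.isBounded_closedBall (x := 0) (r := C)).subset <| by
    rintro _ ⟨x, hx, rfl⟩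
    simpa using hx

theorem continuous_of_additive_of_measurable (hf : ∀ x y, f (x + y) = f x + f y)
    (hm : Measurable f) : Continuous f :=
  MeasureTheory.Measure.AddMonoidHom.continuous_of_measurable (AddMonoidHom.mk' f hf) hm

theorem eq_mul_of_additive_of_locallyBoundedOrMeasurable (hf : ∀ x y, f (x + y) = f x + f y)
    (hr : LocallyBoundedOrMeasurable f) (x : ℝ) : f x = f 1 * x := by
  refine eq_mul_of_additive_of_continuous hf ?_ x
  rcases hr with hb | hm
  · exact continuous_of_additive_of_isBigO_one hf (hb 0)
  · exact continuous_of_additive_of_measurable hf hm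

end Additive

theorem leibniz_of_leibniz_of_one_le {D : ℝ → ℝ} (hD : ∀ x y, D (x + y) = D x + D y)
    (h : ∀ t, 1 ≤ t → ∀ u, D (u * t) = t * D u + u * D t) (t u : ℝ) :
    D (u * t) = t * D u + u * D t := by
  have hs : 1 ≤ |t| + 1 := by linarith [abs_nonneg t]
  have hts : 1 ≤ t + (|t| + 1) := by linarith [neg_abs_le t]
  have := h _ hts u
  rw [mul_add, hD, hD, h _ hs u] at this
  linear_combination this

section Hyperbolic

variable {d : ℝ → ℝ}

noncomputable def sinhDefect (d : ℝ → ℝ) (x : ℝ) : ℝ := d (sinh x) - cosh x * d x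

noncomputable def coshDefect (d : ℝ → ℝ) (y u : ℝ) : ℝ :=
  d (u * cosh y) - cosh y * d u - u * (sinh y * d y)

theorem coshDefect_add (hd : ∀ x y, d (x + y) = d x + d y) (y u v : ℝ) :
    coshDefect d y (u + v) = coshDefect d y u + coshDefect d y v := by
  simp only [coshDefect, add_mul, hd]
  ring

theorem two_mul_coshDefect_sinh (hd : ∀ x y, d (x + y) = d x + d y) (x y : ℝ) :
    2 * coshDefect d y (sinh x) =
      sinhDefect d (x + y) + sinhDefect d (x - y) - 2 * cosh y * sinhDefect d x := by
  have hsub : ∀ a b, d (a - b) = d a - d b := fun a b => by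
    rw [eq_sub_iff_add_eq, ← hd, sub_add_cancel]
  simp only [coshDefect, sinhDefect, sinh_add, sinh_sub, cosh_add, cosh_sub, hd, hsub]
  ring

theorem coshDefect_locallyBoundedOrMeasurable (hd : ∀ x y, d (x + y) = d x + d y)
    (hφ : LocallyBoundedOrMeasurable (sinhDefect d)) (y : ℝ) :
    LocallyBoundedOrMeasurable (coshDefect d y) := by
  have hg : coshDefect d y = fun u => 2⁻¹ * (sinhDefect d (arsinh u + y) +
      sinhDefect d (arsinh u - y) - 2 * cosh y * sinhDefect d (arsinh u)) := by
    ext u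
    rw [← two_mul_coshDefect_sinh hd, sinh_arsinh]
    ring
  rw [hg]
  rcases hφ with hb | hm
  · refine .inl fun u => ?_
    have hcomp (h : ℝ → ℝ) (hh : Continuous h) :
        (fun v => sinhDefect d (h v)) =O[𝓝 u] (fun _ => (1 : ℝ)) :=
      (hb (h u)).comp_tendsto (hh.tendsto u)
    exact (((hcomp _ (continuous_arsinh.add_const y)).add
      (hcomp _ (continuous_arsinh.sub continuous_const))).sub
      ((hcomp _ continuous_arsinh).const_mul_left (2 * cosh y))).const_mul_left 2⁻¹
  · have harsinh : Measurable arsinh := continuous_arsinh.measurable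
    exact .inr (by fun_prop)

theorem coshDefect_eq_mul (hd : ∀ x y, d (x + y) = d x + d y)
    (hφ : LocallyBoundedOrMeasurable (sinhDefect d)) (y u : ℝ) :
    coshDefect d y u = coshDefect d y 1 * u :=
  eq_mul_of_additive_of_locallyBoundedOrMeasurable (coshDefect_add hd y)
    (coshDefect_locallyBoundedOrMeasurable hd hφ y) u

end Hyperbolic

theorem stmt_5 (d : ℝ → ℝ)
    (hd : ∀ x y : ℝ, d (x + y) = d x + d y)
    (hreg : RegularOn (fun x : ℝ => d (Real.sinh x) - Real.cosh x * d x) Set.univ) :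
    ∃ χ : ℝ → ℝ, IsRealDerivation χ ∧ ∀ x : ℝ, d x = χ x + d 1 * x := by
  set D : ℝ → ℝ := fun x => d x - d 1 * x
  have hDadd : ∀ x y, D (x + y) = D x + D y := fun x y => by simp only [D, hd]; ring
  have hφ : LocallyBoundedOrMeasurable (sinhDefect d) := hreg.locallyBoundedOrMeasurable
  have hcosh : ∀ t, 1 ≤ t → ∀ u, D (u * t) = t * D u + u * D t := by
    intro t ht u
    have h := coshDefect_eq_mul hd hφ (arcosh t) u
    simp only [coshDefect, cosh_arcosh ht, one_mul] at h
    simp only [D]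
    linear_combination h
  refine ⟨D, ⟨hDadd, fun x y => ?_⟩, fun x => by simp only [D]; ring⟩
  rw [leibniz_of_leibniz_of_one_le hDadd hcosh y x]
  ring
end

section
/- Let d : ℝ → ℝ be an additive function, let I ⊆ ℝ be a nonempty open interval, and let ξ : I → ℝ be a continuously differentiable injective function whose inverse η = ξ⁻¹ : ξ(I) → ℝ is differentiable with derivative nowhere zero on ξ(I). Then the mapping x ↦ d(ξ(x)) − ξ'(x)·d(x) is regular on I if and only if the mapping u ↦ d(η(u)) − η'(u)·d(u) is regular on ξ(I). -/
/-!
By the chain rule, `η' (ξ x) * ξ' x = 1` on `I`. Hence, at `u = ξ x`,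
`d (η u) - η' u * d u = -η' u * (d (ξ x) - ξ' x * d x)`, and symmetrically with the roles of
`ξ` and `η` exchanged. Each of the three notions of regularity is preserved under composition
with a continuous map and multiplication by a continuous function, and `η'` is continuous
because it equals `1 / (ξ' ∘ η)`.
-/

open Real Set

lemma LocallyBoundedOn.mul_comp {A g h : ℝ → ℝ} {s t : Set ℝ} (hA : LocallyBoundedOn A t)
    (hh : ContinuousOn h s) (hmaps : MapsTo h s t) (hg : ContinuousOn g s) :
    LocallyBoundedOn (fun x => g x * A (h x)) s := by
  intro x hx
  obtain ⟨C, hC⟩ := hA (h x) (hmaps hx)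
  refine ⟨(|g x| + 1) * C, ?_⟩
  have hAh : ∀ᶠ y in nhdsWithin x s, |A (h y)| ≤ C :=
    ((hh x hx).tendsto_nhdsWithin hmaps).eventually hC
  have hgy : ∀ᶠ y in nhdsWithin x s, |g y| < |g x| + 1 :=
    (hg x hx).abs.eventually_lt_const (lt_add_one _)
  filter_upwards [hAh, hgy] with y hAy hgy
  rw [abs_mul]
  exact mul_le_mul hgy.le hAy (abs_nonneg _) (by positivity)

lemma RegularOn.mul_comp {A g h : ℝ → ℝ} {s t : Set ℝ} (hA : RegularOn A t)
    (hh : ContinuousOn h s) (hmaps : MapsTo h s t) (hg : ContinuousOn g s) :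
    RegularOn (fun x => g x * A (h x)) s := by
  rcases hA with hA | hA | hA
  · exact Or.inl (hA.mul_comp hh hmaps hg)
  · exact Or.inr (Or.inl (hg.mul (hA.comp hh hmaps)))
  · exact Or.inr (Or.inr
      (hg.domRestrict.measurable.mul (hA.comp (hh.mapsToRestrict hmaps).measurable)))

lemma RegularOn.congr {f g : ℝ → ℝ} {s : Set ℝ} (hf : RegularOn f s) (hfg : EqOn f g s) :
    RegularOn g s := by
  rcases hf with hf | hf | hf
  · refine Or.inl fun x hx => ?_
    obtain ⟨C, hC⟩ := hf x hx
    refine ⟨C, ?_⟩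
    filter_upwards [hC, self_mem_nhdsWithin] with y hy hys
    rwa [← hfg hys]
  · exact Or.inr (Or.inl (hf.congr hfg.symm))
  · refine Or.inr (Or.inr ?_)
    convert hf using 1
    exact funext fun x => (hfg x.2).symm

lemma mul_eq_one_of_hasDerivWithinAt_of_leftInvOn {𝕜 : Type*} [NontriviallyNormedField 𝕜]
    {ξ η : 𝕜 → 𝕜} {ξ' η' x : 𝕜} {s t : Set 𝕜} (hs : s ∈ nhds x) (hmaps : MapsTo ξ s t)
    (hinv : LeftInvOn η ξ s) (hξ : HasDerivWithinAt ξ ξ' s x)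
    (hη : HasDerivWithinAt η η' t (ξ x)) : η' * ξ' = 1 := by
  have hcomp : HasDerivWithinAt id (η' * ξ') s x :=
    (hη.comp x hξ hmaps).congr (fun y hy => (hinv hy).symm) (hinv (mem_of_mem_nhds hs)).symm
  exact (hcomp.hasDerivAt hs).unique (hasDerivAt_id x)

lemma RegularOn.sub_mul_comp_of_rightInvOn {d ξ ξ' η η' : ℝ → ℝ} {s t : Set ℝ}
    (hη : ContinuousOn η t) (hη' : ContinuousOn η' t) (hmaps : MapsTo η t s)
    (hinv : RightInvOn η ξ t) (hmul : ∀ u ∈ t, η' u * ξ' (η u) = 1)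
    (h : RegularOn (fun x => d (ξ x) - ξ' x * d x) s) :
    RegularOn (fun u => d (η u) - η' u * d u) t := by
  refine (h.mul_comp hη hmaps hη'.neg).congr fun u hu => ?_
  simp only [Pi.neg_apply, hinv hu]
  linear_combination d (η u) * hmul u hu

theorem stmt_6_general (d : ℝ → ℝ)
    (I : Set ℝ) (hI : IsOpen I)
    (ξ ξ' η η' : ℝ → ℝ)
    (hξ : ∀ x ∈ I, HasDerivWithinAt ξ (ξ' x) I x)
    (hξ' : ContinuousOn ξ' I)
    (hleft : ∀ x ∈ I, η (ξ x) = x)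
    (hη : ∀ u ∈ ξ '' I, HasDerivWithinAt η (η' u) (ξ '' I) u) :
    RegularOn (fun x : ℝ => d (ξ x) - ξ' x * d x) I ↔
      RegularOn (fun u : ℝ => d (η u) - η' u * d u) (ξ '' I) := by
  have hleft : LeftInvOn η ξ I := hleft
  have hright : RightInvOn η ξ (ξ '' I) := hleft.rightInvOn_image
  have hmapsη : MapsTo η (ξ '' I) I := hleft.mapsTo (surjOn_image ξ I)
  have hcξ : ContinuousOn ξ I := fun x hx => (hξ x hx).continuousWithinAt
  have hcη : ContinuousOn η (ξ '' I) := fun u hu => (hη u hu).continuousWithinAt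
  have hmul : ∀ x ∈ I, η' (ξ x) * ξ' x = 1 := fun x hx =>
    mul_eq_one_of_hasDerivWithinAt_of_leftInvOn (hI.mem_nhds hx) (mapsTo_image ξ I) hleft
      (hξ x hx) (hη _ (mem_image_of_mem ξ hx))
  have hmul' : ∀ u ∈ ξ '' I, η' u * ξ' (η u) = 1 := fun u hu => by
    simpa only [hright hu] using hmul (η u) (hmapsη hu)
  have hcη' : ContinuousOn η' (ξ '' I) :=
    ((hξ'.comp hcη hmapsη).inv₀ fun u hu => right_ne_zero_of_mul_eq_one (hmul' u hu)).congr
      fun u hu => eq_inv_of_mul_eq_one_left (hmul' u hu)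
  exact ⟨RegularOn.sub_mul_comp_of_rightInvOn hcη hcη' hmapsη hright hmul',
    RegularOn.sub_mul_comp_of_rightInvOn hcξ hξ' (mapsTo_image ξ I) hleft
      fun x hx => by rw [mul_comm, hmul x hx]⟩

theorem stmt_6 (d : ℝ → ℝ)
    (hd : ∀ x y : ℝ, d (x + y) = d x + d y)
    (I : Set ℝ) (hI : IsOpen I) (hIc : I.OrdConnected) (hIne : I.Nonempty)
    (ξ ξ' η η' : ℝ → ℝ)
    (hξ : ∀ x ∈ I, HasDerivWithinAt ξ (ξ' x) I x)
    (hξ' : ContinuousOn ξ' I)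
    (hinj : Set.InjOn ξ I)
    (hleft : ∀ x ∈ I, η (ξ x) = x)
    (hη : ∀ u ∈ ξ '' I, HasDerivWithinAt η (η' u) (ξ '' I) u)
    (hη' : ∀ u ∈ ξ '' I, η' u ≠ 0) :
    RegularOn (fun x : ℝ => d (ξ x) - ξ' x * d x) I ↔
      RegularOn (fun u : ℝ => d (η u) - η' u * d u) (ξ '' I) :=
  stmt_6_general d I hI ξ ξ' η η' hξ hξ' hleft hη
end

section
/- Let ε > 0 and let f : ℝ → ℝ be a function satisfying |f(x + y) − f(x) − f(y)| ≤ ε for all x, y ∈ ℝ, and such that the mapping x ↦ f(arcosh(x)) − (1/√(x² − 1))·f(x) is locally bounded on (1, ∞), where arcosh(x) = ln(x + √(x² − 1)) is the inverse of cosh restricted to [0, ∞). Then there exist a real number λ and a real derivation χ : ℝ → ℝ such that |f(x) − (χ(x) + λ·x)| ≤ ε for all x ∈ ℝ. -/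
/-! By Hyers' theorem `f` lies within `ε` of an additive `g`, and the arcosh defect
`D x = g (arcosh x) - g x / √(x ^ 2 - 1)` of `g` is still locally bounded on `(1, ∞)`.
Because `arcosh (2x² - 1) = 2 arcosh x` and `√((2x² - 1)² - 1) = 2x √(x² - 1)`, additivity gives
`g (x²) - 2x g x = x √(x² - 1) (2 D x - D (2x² - 1)) + g 1 / 2`, so `A x = g (x²) - 2x g x` is
bounded near `2`. As `A (q x) = q² A x` for rational `q`, this yields `|A x| ≤ M x²` everywhere.
For fixed `x`, the additive map `y ↦ g (xy) - x g y - y g x` is half the polarization of `A`, hence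
bounded near `0`, hence linear; this identifies it as `-g 1 · xy`, so `g - g 1 · id` is a
derivation. -/

open Real Set

open Filter Topology Asymptotics

section Hyers

variable {G E : Type*} [AddCommMonoid G] [NormedAddCommGroup E] [NormedSpace ℝ E]
  {f : G → E} {ε : ℝ}

noncomputable def hyersSeq (f : G → E) (x : G) (n : ℕ) : E := (2 ^ n : ℝ)⁻¹ • f (2 ^ n • x)

lemma norm_hyersSeq_add_sub_le (hf : ∀ x y, ‖f (x + y) - f x - f y‖ ≤ ε) (x y : G) (n : ℕ) :
    ‖hyersSeq f (x + y) n - hyersSeq f x n - hyersSeq f y n‖ ≤ ε / 2 ^ n := by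
  simp only [hyersSeq, ← smul_sub, smul_add, norm_smul, norm_inv, norm_pow, Real.norm_two]
  rw [inv_mul_le_iff₀ (by positivity), mul_div_cancel₀ _ (by positivity)]
  exact hf _ _

lemma dist_hyersSeq_succ_le (hf : ∀ x y, ‖f (x + y) - f x - f y‖ ≤ ε) (x : G) (n : ℕ) :
    dist (hyersSeq f x n) (hyersSeq f x (n + 1)) ≤ ε / 2 / 2 ^ n := by
  have key : hyersSeq f x n - hyersSeq f x (n + 1) =
      -(2 ^ (n + 1) : ℝ)⁻¹ • (f (2 ^ n • x + 2 ^ n • x) - f (2 ^ n • x) - f (2 ^ n • x)) := by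
    have h2 : 2 ^ (n + 1) • x = 2 ^ n • x + 2 ^ n • x := by rw [pow_succ, mul_nsmul, two_nsmul]
    rw [hyersSeq, hyersSeq, h2]
    module
  rw [dist_eq_norm, key, norm_smul, norm_neg, norm_inv, norm_pow, Real.norm_two,
    inv_mul_le_iff₀ (by positivity)]
  calc _ ≤ ε := hf _ _
    _ = 2 ^ (n + 1) * (ε / 2 / 2 ^ n) := by field_simp; ring

theorem exists_addMonoidHom_norm_sub_le [CompleteSpace E]
    (hf : ∀ x y, ‖f (x + y) - f x - f y‖ ≤ ε) :
    ∃ g : G →+ E, ∀ x, ‖f x - g x‖ ≤ ε := by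
  have hlim x := cauchySeq_tendsto_of_complete (cauchySeq_of_le_geometric_two
    (dist_hyersSeq_succ_le hf x))
  choose g hg using hlim
  have hg_add x y : g (x + y) = g x + g y := by
    have hzero : Tendsto (fun n ↦ hyersSeq f (x + y) n - hyersSeq f x n - hyersSeq f y n)
        atTop (𝓝 0) :=
      squeeze_zero_norm (norm_hyersSeq_add_sub_le hf x y)
        (tendsto_const_nhds.div_atTop (tendsto_pow_atTop_atTop_of_one_lt one_lt_two))
    have := tendsto_nhds_unique (((hg (x + y)).sub (hg x)).sub (hg y)) hzero
    rwa [sub_sub, sub_eq_zero] at this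
  refine ⟨AddMonoidHom.mk' g hg_add, fun x ↦ ?_⟩
  simpa [hyersSeq, dist_eq_norm] using dist_le_of_le_geometric_two_of_tendsto₀
    (dist_hyersSeq_succ_le hf x) (hg x)

end Hyers

lemma LocallyBoundedOn.isBigO_one {φ : ℝ → ℝ} {s : Set ℝ} {x : ℝ} (h : LocallyBoundedOn φ s)
    (hs : s ∈ 𝓝 x) : φ =O[𝓝 x] (fun _ ↦ (1 : ℝ)) := by
  obtain ⟨C, hC⟩ := h x (mem_of_mem_nhds hs)
  rw [nhdsWithin_eq_nhds.mpr hs] at hC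
  exact .of_bound C (by simpa using hC)

namespace Real

lemma arcosh_two_mul_sq_sub_one {x : ℝ} (hx : 1 ≤ x) : arcosh (2 * x ^ 2 - 1) = 2 * arcosh x := by
  have hcosh : cosh (2 * arcosh x) = 2 * x ^ 2 - 1 := by
    rw [cosh_two_mul, cosh_arcosh hx, sinh_arcosh hx, sq_sqrt (by nlinarith)]
    ring
  rw [← hcosh, arcosh_cosh (by linarith [arcosh_nonneg hx])]

lemma sqrt_sq_two_mul_sq_sub_one_sub_one {x : ℝ} (hx : 0 ≤ x) :
    √((2 * x ^ 2 - 1) ^ 2 - 1) = 2 * x * √(x ^ 2 - 1) := by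
  rw [show (2 * x ^ 2 - 1) ^ 2 - 1 = (2 * x) ^ 2 * (x ^ 2 - 1) by ring,
    sqrt_mul (by positivity), sqrt_sq (by positivity)]

end Real

/-- Since `arcosh' x = 1 / √(x ^ 2 - 1)`, this is the defect of the chain rule for `g ∘ arcosh`. -/
noncomputable def arcoshDefect (g : ℝ → ℝ) (x : ℝ) : ℝ := g (arcosh x) - (1 / √(x ^ 2 - 1)) * g x

lemma isBigO_arcoshDefect_of_abs_le {h : ℝ → ℝ} {C : ℝ} (hC : ∀ x, |h x| ≤ C) {x : ℝ}
    (hx : 1 < x) : arcoshDefect h =O[𝓝 x] (fun _ ↦ (1 : ℝ)) := by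
  have hh (k : ℝ → ℝ) : (fun y ↦ h (k y)) =O[𝓝 x] (fun _ ↦ (1 : ℝ)) :=
    .of_bound C (.of_forall fun y ↦ by simpa using hC (k y))
  have hne : √(x ^ 2 - 1) ≠ 0 := (sqrt_pos.mpr (by nlinarith)).ne'
  have hsqrt : ContinuousAt (fun y ↦ 1 / √(y ^ 2 - 1)) x := by fun_prop (disch := exact hne)
  have hprod : (fun y ↦ 1 / √(y ^ 2 - 1) * h y) =O[𝓝 x] (fun _ ↦ (1 : ℝ)) := by
    simpa using (hsqrt.tendsto.isBigO_one ℝ).mul (hh id)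
  exact (hh arcosh).sub hprod

lemma isBigO_arcoshDefect_of_abs_sub_le {f g : ℝ → ℝ} {ε : ℝ} (hfg : ∀ x, |f x - g x| ≤ ε)
    {x : ℝ} (hx : 1 < x) (hf : arcoshDefect f =O[𝓝 x] (fun _ ↦ (1 : ℝ))) :
    arcoshDefect g =O[𝓝 x] (fun _ ↦ (1 : ℝ)) := by
  have hdiff := isBigO_arcoshDefect_of_abs_le hfg hx
  refine (hf.sub hdiff).congr (fun y ↦ ?_) (fun _ ↦ rfl)
  simp only [arcoshDefect]
  ring

lemma AddMonoidHom.map_sq_sub_eq_arcoshDefect (g : ℝ →+ ℝ) {x : ℝ} (hx : 1 < x) :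
    g (x ^ 2) - 2 * x * g x =
      x * √(x ^ 2 - 1) * (2 * arcoshDefect g x - arcoshDefect g (2 * x ^ 2 - 1)) + g 1 / 2 := by
  have hu : 0 < √(x ^ 2 - 1) := sqrt_pos.mpr (by nlinarith)
  rw [arcoshDefect, arcoshDefect, arcosh_two_mul_sq_sub_one hx.le,
    sqrt_sq_two_mul_sq_sub_one_sub_one (by linarith), map_sub, two_mul (arcosh x),
    two_mul (x ^ 2), map_add, map_add]
  field_simp
  ring

lemma AddMonoidHom.isBigO_map_sq_sub (g : ℝ →+ ℝ) {c : ℝ} (hc : 1 < c)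
    (h₁ : arcoshDefect g =O[𝓝 c] (fun _ ↦ (1 : ℝ)))
    (h₂ : arcoshDefect g =O[𝓝 (2 * c ^ 2 - 1)] (fun _ ↦ (1 : ℝ))) :
    (fun x ↦ g (x ^ 2) - 2 * x * g x) =O[𝓝 c] (fun _ ↦ (1 : ℝ)) := by
  have hfactor : (fun x ↦ x * √(x ^ 2 - 1)) =O[𝓝 c] (fun _ ↦ (1 : ℝ)) :=
    (Continuous.tendsto (by fun_prop) c).isBigO_one ℝ
  have hdouble : (fun x ↦ arcoshDefect g (2 * x ^ 2 - 1)) =O[𝓝 c] (fun _ ↦ (1 : ℝ)) :=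
    h₂.comp_tendsto (Continuous.tendsto (by fun_prop) c)
  have hprod : (fun x ↦ x * √(x ^ 2 - 1) *
      (2 * arcoshDefect g x - arcoshDefect g (2 * x ^ 2 - 1))) =O[𝓝 c] (fun _ ↦ (1 : ℝ)) := by
    simpa using hfactor.mul ((h₁.const_mul_left 2).sub hdouble)
  refine (hprod.add (isBigO_const_const (g 1 / 2) one_ne_zero (𝓝 c))).congr' ?_ .rfl
  filter_upwards [Ioi_mem_nhds hc] with x hx using (g.map_sq_sub_eq_arcoshDefect hx).symm

lemma exists_abs_le_mul_sq_of_isBigO {A : ℝ → ℝ} (hA : ∀ (q : ℚ) t, A (q * t) = q ^ 2 * A t)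
    {c : ℝ} (hc : c ≠ 0) (hb : A =O[𝓝 c] (fun _ ↦ (1 : ℝ))) : ∃ M, ∀ t, |A t| ≤ M * t ^ 2 := by
  obtain ⟨K, hK⟩ := hb.bound
  obtain ⟨δ, hδ, hδK⟩ := Metric.eventually_nhds_iff.1 hK
  set r := min δ (|c| / 2)
  have hr : 0 < r := lt_min hδ (by positivity)
  refine ⟨4 * K / c ^ 2, fun t ↦ ?_⟩
  rcases eq_or_ne t 0 with rfl | ht
  · simpa using hA 0 0
  obtain ⟨q, hq⟩ := exists_rat_near (c / t) (div_pos hr (abs_pos.2 ht))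
  have hqt : |q * t - c| < r := by
    calc |q * t - c| = |t| * |c / t - q| := by
          rw [← abs_mul, abs_sub_comm]; congr 1; field_simp
      _ < |t| * (r / |t|) := by gcongr
      _ = r := by field_simp
  have hAq : |A (q * t)| ≤ K := by
    simpa using hδK (y := q * t) (by rw [Real.dist_eq]; exact hqt.trans_le (min_le_left _ _))
  have hlarge : c ^ 2 / 4 ≤ (q * t) ^ 2 := by
    have : |c| / 2 ≤ |q * t| := by
      have := abs_sub_abs_le_abs_sub c (q * t)
      rw [abs_sub_comm] at this
      linarith [min_le_right δ (|c| / 2)]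
    nlinarith [sq_abs c, sq_abs (q * t), abs_nonneg c]
  rw [hA, abs_mul, abs_of_nonneg (by positivity)] at hAq
  rw [div_mul_eq_mul_div, le_div_iff₀ (by positivity)]
  nlinarith [abs_nonneg (A t), mul_le_mul_of_nonneg_left hlarge (abs_nonneg (A t)), sq_nonneg t]

lemma AddMonoidHom.map_sq_sub_ratCast_mul (g : ℝ →+ ℝ) (q : ℚ) (t : ℝ) :
    g ((q * t) ^ 2) - 2 * (q * t) * g (q * t) = q ^ 2 * (g (t ^ 2) - 2 * t * g t) := by
  have hq (r : ℚ) (s : ℝ) : g (r * s) = r * g s := by simpa using map_ratCast_smul g ℝ ℝ r s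
  rw [mul_pow, ← Rat.cast_pow, hq, hq]
  push_cast
  ring

lemma AddMonoidHom.eq_mul_map_one_of_isBounded (k : ℝ →+ ℝ) {s : Set ℝ} (hs : s ∈ 𝓝 0)
    (hb : Bornology.IsBounded (k '' s)) (y : ℝ) : k y = y * k 1 := by
  simpa using map_real_smul k (k.continuous_of_isBounded_nhds_zero hs hb) y 1

lemma AddMonoidHom.map_mul_of_abs_le_mul_sq (g : ℝ →+ ℝ) {M : ℝ}
    (hM : ∀ t, |g (t ^ 2) - 2 * t * g t| ≤ M * t ^ 2) (x y : ℝ) :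
    g (x * y) = x * g y + y * g x - g 1 * (x * y) := by
  let k : ℝ →+ ℝ := g.comp (AddMonoidHom.mulLeft x) - (AddMonoidHom.mulLeft x).comp g -
    AddMonoidHom.mulRight (g x)
  have hk z : k z = g (x * z) - x * g z - z * g x := rfl
  have hpolar z : 2 * k z = (g ((x + z) ^ 2) - 2 * (x + z) * g (x + z)) -
      (g (x ^ 2) - 2 * x * g x) - (g (z ^ 2) - 2 * z * g z) := by
    rw [hk, add_sq, mul_assoc 2, two_mul (x * z), map_add, map_add, map_add, map_add]
    ring
  have hM0 : 0 ≤ M := by simpa using (abs_nonneg _).trans (hM 1)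
  have hbdd : Bornology.IsBounded (k '' Metric.ball 0 1) := by
    refine isBounded_iff_forall_norm_le.2 ⟨M * ((|x| + 1) ^ 2 + x ^ 2 + 1), ?_⟩
    rintro _ ⟨z, hz, rfl⟩
    rw [mem_ball_zero_iff, Real.norm_eq_abs] at hz
    have hxz : (x + z) ^ 2 ≤ (|x| + 1) ^ 2 := by
      rw [← sq_abs]
      gcongr
      exact (abs_add_le x z).trans (by linarith)
    have hz2 : z ^ 2 ≤ 1 := by nlinarith [sq_abs z, abs_nonneg z]
    have e1 := mul_le_mul_of_nonneg_left hxz hM0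
    have e3 := mul_le_mul_of_nonneg_left hz2 hM0
    have e4 := mul_nonneg hM0 (sq_nonneg x)
    have h1 := abs_le.1 (hM (x + z))
    have h2 := abs_le.1 (hM x)
    have h3 := abs_le.1 (hM z)
    rw [Real.norm_eq_abs, abs_le]
    constructor <;> linarith [hpolar z]
  have := k.eq_mul_map_one_of_isBounded (Metric.ball_mem_nhds 0 one_pos) hbdd y
  rw [hk, hk, mul_one, one_mul] at this
  linarith

lemma isRealDerivation_sub_mul_map_one (g : ℝ →+ ℝ)
    (hmul : ∀ x y, g (x * y) = x * g y + y * g x - g 1 * (x * y)) :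
    IsRealDerivation (fun t ↦ g t - g 1 * t) := by
  refine ⟨fun x y ↦ ?_, fun x y ↦ ?_⟩
  · simp only [map_add]; ring
  · simp only [hmul]; ring

theorem stmt_19_general (ε : ℝ) (f : ℝ → ℝ)
    (hf : ∀ x y : ℝ, |f (x + y) - f x - f y| ≤ ε)
    (hlb : LocallyBoundedOn
      (fun x : ℝ => f (Real.log (x + Real.sqrt (x ^ 2 - 1))) -
        (1 / Real.sqrt (x ^ 2 - 1)) * f x)
      (Set.Ioi 1)) :
    ∃ (l : ℝ) (χ : ℝ → ℝ), IsRealDerivation χ ∧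
      ∀ x : ℝ, |f x - (χ x + l * x)| ≤ ε := by
  obtain ⟨g, hfg⟩ := exists_addMonoidHom_norm_sub_le (G := ℝ) (E := ℝ) (f := f) hf
  replace hfg (x : ℝ) : |f x - g x| ≤ ε := hfg x
  have hD {x : ℝ} (hx : 1 < x) : arcoshDefect g =O[𝓝 x] (fun _ ↦ (1 : ℝ)) :=
    isBigO_arcoshDefect_of_abs_sub_le hfg hx (hlb.isBigO_one (Ioi_mem_nhds hx))
  obtain ⟨M, hM⟩ := exists_abs_le_mul_sq_of_isBigO g.map_sq_sub_ratCast_mul two_ne_zero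
    (g.isBigO_map_sq_sub one_lt_two (hD one_lt_two) (hD (by norm_num)))
  refine ⟨g 1, fun t ↦ g t - g 1 * t,
    isRealDerivation_sub_mul_map_one g (g.map_mul_of_abs_le_mul_sq hM), fun x ↦ ?_⟩
  simpa using hfg x

theorem stmt_19 (ε : ℝ) (hε : 0 < ε) (f : ℝ → ℝ)
    (hf : ∀ x y : ℝ, |f (x + y) - f x - f y| ≤ ε)
    (hlb : LocallyBoundedOn
      (fun x : ℝ => f (Real.log (x + Real.sqrt (x ^ 2 - 1))) -
        (1 / Real.sqrt (x ^ 2 - 1)) * f x)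
      (Set.Ioi 1)) :
    ∃ (l : ℝ) (χ : ℝ → ℝ), IsRealDerivation χ ∧
      ∀ x : ℝ, |f x - (χ x + l * x)| ≤ ε :=
  stmt_19_general ε f hf hlb
end
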